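/- arXiv:math/0409563 — 2 statements merged into one kernel-verified Lean document; each statement's English description precedes it below -/
import Mathlib

section
/- Let g be a basic classical Lie superalgebra (type A–G) with Cartan subalgebra h, Borel subalgebras b₊ = n₊ ⊕ h and b₋ = n₋ ⊕ h, nondegenerate supersymmetric invariant bilinear form (·,·) on g whose restriction (·,·)_h to h is nondegenerate, and embeddings η±: b± → g ⊕ h, x ↦ x ⊕ (± x̄) where x̄ is the h-component of x. Then (g ⊕ h, η₊(b₊), η₋(b₋)) is a super Manin triple with respect to the form (·,·)_{g⊕h} = (·,·) − (·,·)_h; in particular η±(b±) are isotropic with respect to this form. -/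
open TensorProduct
open scoped TensorProduct

noncomputable section

/-- The Koszul sign `(-1)^{|i||j|}`. -/
def ksign (k : Type*) [Ring k] (i j : ZMod 2) : k := (-1 : k) ^ (i.val * j.val)

/-- Let `g` be a basic classical Lie superalgebra of type
A–G with (purely even, abelian) Cartan subalgebra `h`, nilpotent parts `n±`,
Borel subalgebras `b± = n± ⊕ h`, and nondegenerate supersymmetric invariant
form `(·,·)` (with `(·,·)|_h` nondegenerate, and `n±` orthogonal to
`b± = n± ⊕ h`, as follows from the root space decomposition).  With
`η± : b± → g ⊕ h, x ↦ x ⊕ (±x̄)` (`x̄` the `h`-component of `x`), the triple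
`(g ⊕ h, η₊(b₊), η₋(b₋))` is a super Manin triple for the form
`(·,·)_{g⊕h} = (·,·) − (·,·)_h`: the form is supersymmetric, invariant and
nondegenerate, `η₊(b₊)` and `η₋(b₋)` are complementary isotropic Lie
subsuperalgebras of `g ⊕ h`. -/
theorem borel_manin_triple
    (k : Type*) [Field k] [CharZero k]
    {g : Type*} [AddCommGroup g] [Module k g] [FiniteDimensional k g]
    (gr : ZMod 2 → Submodule k g) [DirectSum.Decomposition gr]
    -- Lie superalgebra structure on g
    (br : g →ₗ[k] g →ₗ[k] g)
    (hbr_grade : ∀ (i j : ZMod 2) (x y : g), x ∈ gr i → y ∈ gr j → br x y ∈ gr (i + j))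
    (hbr_anti : ∀ (i j : ZMod 2) (x y : g), x ∈ gr i → y ∈ gr j →
      br x y = -(ksign k i j) • br y x)
    (hbr_jac : ∀ (i j : ZMod 2) (x y z : g), x ∈ gr i → y ∈ gr j →
      br x (br y z) = br (br x y) z + ksign k i j • br y (br x z))
    -- the invariant form on g
    (Bg : g →ₗ[k] g →ₗ[k] k)
    (hBg_nondeg : ∀ x : g, (∀ y : g, Bg x y = 0) → x = 0)
    (hBg_supersym : ∀ (i j : ZMod 2) (x y : g), x ∈ gr i → y ∈ gr j →
      Bg x y = ksign k i j • Bg y x)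
    (hBg_inv : ∀ x y z : g, Bg (br x y) z = Bg x (br y z))
    -- the triangular decomposition g = n₊ ⊕ h ⊕ n₋
    (np hsub nm : Submodule k g)
    (h_even : hsub ≤ gr 0)
    (h_abelian : ∀ a ∈ hsub, ∀ b ∈ hsub, br a b = 0)
    (h_bp_subalg : ∀ x ∈ np ⊔ hsub, ∀ y ∈ np ⊔ hsub, br x y ∈ np ⊔ hsub)
    (h_bm_subalg : ∀ x ∈ nm ⊔ hsub, ∀ y ∈ nm ⊔ hsub, br x y ∈ nm ⊔ hsub)
    (h_indep₁ : np ⊓ (hsub ⊔ nm) = ⊥)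
    (h_indep₂ : hsub ⊓ (np ⊔ nm) = ⊥)
    (h_indep₃ : nm ⊓ (np ⊔ hsub) = ⊥)
    (h_span : np ⊔ hsub ⊔ nm = ⊤)
    -- the form restricted to h is nondegenerate
    (hBh_nondeg : ∀ a ∈ hsub, (∀ b ∈ hsub, Bg a b = 0) → a = 0)
    -- n± is orthogonal to b± = n± ⊕ h
    (h_orth_p : ∀ x ∈ np, ∀ y ∈ np ⊔ hsub, Bg x y = 0 ∧ Bg y x = 0)
    (h_orth_m : ∀ x ∈ nm, ∀ y ∈ nm ⊔ hsub, Bg x y = 0 ∧ Bg y x = 0)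
    -- the projection onto the h-component
    (πh : g →ₗ[k] g)
    (hπh_mem : ∀ x : g, πh x ∈ hsub)
    (hπh_id : ∀ x ∈ hsub, πh x = x)
    (hπh_np : ∀ x ∈ np, πh x = 0)
    (hπh_nm : ∀ x ∈ nm, πh x = 0) :
    -- the structure maps of g ⊕ h
    ∀ (BG : (g × ↥hsub) →ₗ[k] (g × ↥hsub) →ₗ[k] k)
      (brG : (g × ↥hsub) →ₗ[k] (g × ↥hsub) →ₗ[k] (g × ↥hsub))
      (ηp ηm : g →ₗ[k] (g × ↥hsub)),
      (∀ u v : g × ↥hsub, BG u v = Bg u.1 v.1 - Bg (u.2 : g) (v.2 : g)) →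
      (∀ u v : g × ↥hsub, brG u v = (br u.1 v.1, 0)) →
      (∀ x : g, ηp x = (x, ⟨πh x, hπh_mem x⟩)) →
      (∀ x : g, ηm x = (x, -⟨πh x, hπh_mem x⟩)) →
      -- (g ⊕ h, η₊(b₊), η₋(b₋)) is a super Manin triple:
      -- the form is supersymmetric (h being purely even) ...
      (∀ (i j : ZMod 2) (u v : g × ↥hsub),
        u ∈ (gr i).prod (if i = 0 then ⊤ else ⊥) →
        v ∈ (gr j).prod (if j = 0 then ⊤ else ⊥) →
        BG u v = ksign k i j • BG v u) ∧
      -- ... invariant ...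
      (∀ u v w : g × ↥hsub, BG (brG u v) w = BG u (brG v w)) ∧
      -- ... and nondegenerate;
      (∀ u : g × ↥hsub, (∀ v : g × ↥hsub, BG u v = 0) → u = 0) ∧
      -- η±(b±) are isotropic ...
      (∀ u ∈ Submodule.map ηp (np ⊔ hsub), ∀ v ∈ Submodule.map ηp (np ⊔ hsub),
        BG u v = 0) ∧
      (∀ u ∈ Submodule.map ηm (nm ⊔ hsub), ∀ v ∈ Submodule.map ηm (nm ⊔ hsub),
        BG u v = 0) ∧
      -- ... Lie subsuperalgebras ...
      (∀ u ∈ Submodule.map ηp (np ⊔ hsub), ∀ v ∈ Submodule.map ηp (np ⊔ hsub),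
        brG u v ∈ Submodule.map ηp (np ⊔ hsub)) ∧
      (∀ u ∈ Submodule.map ηm (nm ⊔ hsub), ∀ v ∈ Submodule.map ηm (nm ⊔ hsub),
        brG u v ∈ Submodule.map ηm (nm ⊔ hsub)) ∧
      -- ... and g ⊕ h ≅ η₊(b₊) ⊕ η₋(b₋) as superspaces
      IsCompl (Submodule.map ηp (np ⊔ hsub)) (Submodule.map ηm (nm ⊔ hsub)) := by

  intro BG brG ηp ηm hBG hbrG hηp hηm
  have hple : np ≤ np ⊔ hsub := le_sup_left
  have hhle : hsub ≤ np ⊔ hsub := le_sup_right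
  have hmle : nm ≤ nm ⊔ hsub := le_sup_left
  have hhle' : hsub ≤ nm ⊔ hsub := le_sup_right
  -- Lemma A: br n a ∈ np for n ∈ np, a ∈ hsub
  have lemA_p : ∀ n ∈ np, ∀ a ∈ hsub, br n a ∈ np := by
    intro n hn a ha
    obtain ⟨m, hm, c, hc, hmc⟩ := Submodule.mem_sup.mp
      (h_bp_subalg n (hple hn) a (hhle ha))
    have hc0 : c = 0 := by
      apply hBh_nondeg c hc
      intro b hb
      have h1 : Bg (br n a) b = 0 := by
        rw [hBg_inv, h_abelian a ha b hb, map_zero]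
      have h2 : Bg m b = 0 := (h_orth_p m hm b (hhle hb)).1
      have h3 : Bg m b + Bg c b = 0 := by
        rw [← LinearMap.add_apply, ← map_add, hmc]; exact h1
      rw [h2, zero_add] at h3; exact h3
    rw [← hmc, hc0, add_zero]; exact hm
  have lemA_m : ∀ n ∈ nm, ∀ a ∈ hsub, br n a ∈ nm := by
    intro n hn a ha
    obtain ⟨m, hm, c, hc, hmc⟩ := Submodule.mem_sup.mp
      (h_bm_subalg n (hmle hn) a (hhle' ha))
    have hc0 : c = 0 := by
      apply hBh_nondeg c hc
      intro b hb
      have h1 : Bg (br n a) b = 0 := by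
        rw [hBg_inv, h_abelian a ha b hb, map_zero]
      have h2 : Bg m b = 0 := (h_orth_m m hm b (hhle' hb)).1
      have h3 : Bg m b + Bg c b = 0 := by
        rw [← LinearMap.add_apply, ← map_add, hmc]; exact h1
      rw [h2, zero_add] at h3; exact h3
    rw [← hmc, hc0, add_zero]; exact hm
  -- Lemma B: πh (br x y) = 0 for x, y ∈ b±
  have lemB_p : ∀ x ∈ np ⊔ hsub, ∀ y ∈ np ⊔ hsub, πh (br x y) = 0 := by
    intro x hx y hy
    have key : ∀ a ∈ hsub, Bg (br x y) a = 0 := by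
      intro a ha
      obtain ⟨yn, hyn, yh, hyh, hyd⟩ := Submodule.mem_sup.mp hy
      have hya : br y a = br yn a := by
        rw [← hyd, map_add, LinearMap.add_apply, h_abelian yh hyh a ha, add_zero]
      rw [hBg_inv, hya]
      exact (h_orth_p (br yn a) (lemA_p yn hyn a ha) x hx).2
    obtain ⟨m, hm, c, hc, hmc⟩ := Submodule.mem_sup.mp (h_bp_subalg x hx y hy)
    have hc0 : c = 0 := by
      apply hBh_nondeg c hc
      intro b hb
      have h2 : Bg m b = 0 := (h_orth_p m hm b (hhle hb)).1
      have h3 : Bg m b + Bg c b = 0 := by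
        rw [← LinearMap.add_apply, ← map_add, hmc]; exact key b hb
      rw [h2, zero_add] at h3; exact h3
    rw [← hmc, map_add, hπh_np m hm, hπh_id c hc, hc0, add_zero]
  have lemB_m : ∀ x ∈ nm ⊔ hsub, ∀ y ∈ nm ⊔ hsub, πh (br x y) = 0 := by
    intro x hx y hy
    have key : ∀ a ∈ hsub, Bg (br x y) a = 0 := by
      intro a ha
      obtain ⟨yn, hyn, yh, hyh, hyd⟩ := Submodule.mem_sup.mp hy
      have hya : br y a = br yn a := by
        rw [← hyd, map_add, LinearMap.add_apply, h_abelian yh hyh a ha, add_zero]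
      rw [hBg_inv, hya]
      exact (h_orth_m (br yn a) (lemA_m yn hyn a ha) x hx).2
    obtain ⟨m, hm, c, hc, hmc⟩ := Submodule.mem_sup.mp (h_bm_subalg x hx y hy)
    have hc0 : c = 0 := by
      apply hBh_nondeg c hc
      intro b hb
      have h2 : Bg m b = 0 := (h_orth_m m hm b (hhle' hb)).1
      have h3 : Bg m b + Bg c b = 0 := by
        rw [← LinearMap.add_apply, ← map_add, hmc]; exact key b hb
      rw [h2, zero_add] at h3; exact h3
    rw [← hmc, map_add, hπh_nm m hm, hπh_id c hc, hc0, add_zero]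
  -- Lemma C: Bg x y = Bg (πh x) (πh y) for x, y ∈ b±
  have lemC_p : ∀ x ∈ np ⊔ hsub, ∀ y ∈ np ⊔ hsub, Bg x y = Bg (πh x) (πh y) := by
    intro x hx y hy
    obtain ⟨xn, hxn, xh, hxh, hxd⟩ := Submodule.mem_sup.mp hx
    obtain ⟨yn, hyn, yh, hyh, hyd⟩ := Submodule.mem_sup.mp hy
    have hπx : πh x = xh := by rw [← hxd, map_add, hπh_np xn hxn, hπh_id xh hxh, zero_add]
    have hπy : πh y = yh := by rw [← hyd, map_add, hπh_np yn hyn, hπh_id yh hyh, zero_add]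
    have h1 : Bg xn y = 0 := (h_orth_p xn hxn y hy).1
    have h2 : Bg xh yn = 0 := (h_orth_p yn hyn xh (hhle hxh)).2
    rw [hπx, hπy, ← hxd]
    have e1 : Bg (xn + xh) y = Bg xn y + Bg xh y := by
      rw [map_add, LinearMap.add_apply]
    rw [e1, h1, zero_add, ← hyd, map_add, h2, zero_add]
  have lemC_m : ∀ x ∈ nm ⊔ hsub, ∀ y ∈ nm ⊔ hsub, Bg x y = Bg (πh x) (πh y) := by
    intro x hx y hy
    obtain ⟨xn, hxn, xh, hxh, hxd⟩ := Submodule.mem_sup.mp hx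
    obtain ⟨yn, hyn, yh, hyh, hyd⟩ := Submodule.mem_sup.mp hy
    have hπx : πh x = xh := by rw [← hxd, map_add, hπh_nm xn hxn, hπh_id xh hxh, zero_add]
    have hπy : πh y = yh := by rw [← hyd, map_add, hπh_nm yn hyn, hπh_id yh hyh, zero_add]
    have h1 : Bg xn y = 0 := (h_orth_m xn hxn y hy).1
    have h2 : Bg xh yn = 0 := (h_orth_m yn hyn xh (hhle' hxh)).2
    rw [hπx, hπy, ← hxd]
    have e1 : Bg (xn + xh) y = Bg xn y + Bg xh y := by
      rw [map_add, LinearMap.add_apply]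
    rw [e1, h1, zero_add, ← hyd, map_add, h2, zero_add]
  refine ⟨?_, ?_, ?_, ?_, ?_, ?_, ?_, ?_⟩
  · -- supersymmetry
    intro i j u v hu hv
    obtain ⟨hu1, hu2⟩ := Submodule.mem_prod.mp hu
    obtain ⟨hv1, hv2⟩ := Submodule.mem_prod.mp hv
    rw [hBG, hBG, smul_sub]
    have h1 : Bg u.1 v.1 = ksign k i j • Bg v.1 u.1 := hBg_supersym i j u.1 v.1 hu1 hv1
    have h2 : Bg (u.2 : g) (v.2 : g) = ksign k i j • Bg (v.2 : g) (u.2 : g) := by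
      by_cases hi : i = 0
      · by_cases hj : j = 0
        · subst hi; subst hj
          have := hBg_supersym 0 0 (u.2 : g) (v.2 : g) (h_even u.2.2) (h_even v.2.2)
          simpa [ksign] using this
        · rw [if_neg hj] at hv2
          have : v.2 = 0 := Submodule.mem_bot k |>.mp hv2
          rw [this]; simp
      · rw [if_neg hi] at hu2
        have : u.2 = 0 := Submodule.mem_bot k |>.mp hu2
        rw [this]; simp
    rw [h1, h2]
  · -- invariance
    intro u v w
    rw [hBG, hBG, hbrG, hbrG]
    simp [hBg_inv]
  · -- nondegeneracy
    intro u hu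
    have h1 : u.1 = 0 := by
      apply hBg_nondeg
      intro y
      have := hu (y, 0)
      rw [hBG] at this
      simpa using this
    have h2 : (u.2 : g) = 0 := by
      apply hBh_nondeg _ u.2.2
      intro b hb
      have := hu (0, ⟨b, hb⟩)
      rw [hBG] at this
      simp at this
      exact this
    exact Prod.ext h1 (Subtype.ext h2)
  · -- isotropy of ηp(b₊)
    rintro u ⟨x, hx, rfl⟩ v ⟨y, hy, rfl⟩
    rw [hBG, hηp x, hηp y]
    simp [lemC_p x hx y hy]
  · -- isotropy of ηm(b₋)
    rintro u ⟨x, hx, rfl⟩ v ⟨y, hy, rfl⟩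
    rw [hBG, hηm x, hηm y]
    simp [lemC_m x hx y hy]
  · -- subalgebra ηp(b₊)
    rintro u ⟨x, hx, rfl⟩ v ⟨y, hy, rfl⟩
    refine ⟨br x y, h_bp_subalg x hx y hy, ?_⟩
    rw [hbrG, hηp x, hηp y, hηp (br x y)]
    exact Prod.ext rfl (Subtype.ext (lemB_p x hx y hy))
  · -- subalgebra ηm(b₋)
    rintro u ⟨x, hx, rfl⟩ v ⟨y, hy, rfl⟩
    refine ⟨br x y, h_bm_subalg x hx y hy, ?_⟩
    rw [hbrG, hηm x, hηm y, hηm (br x y)]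
    refine Prod.ext rfl ?_
    simp only
    rw [neg_eq_zero]
    exact Subtype.ext (lemB_m x hx y hy)
  · -- complementarity
    constructor
    · rw [Submodule.disjoint_def]
      rintro u ⟨x, hx, rfl⟩ ⟨y, hy, hyx⟩
      rw [hηm y, hηp x] at hyx
      have hxy : y = x := congrArg Prod.fst hyx
      have hπ : -(πh y) = πh x := congrArg (fun p => ((Prod.snd p : ↥hsub) : g)) hyx
      have hπ0 : πh x = 0 := by
        rw [hxy] at hπ
        have hadd : πh x + πh x = 0 := by
          nth_rewrite 1 [← hπ]; abel
        have h2 : (2 : k) • πh x = 0 := by rw [two_smul]; exact hadd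
        have := smul_eq_zero.mp h2
        rcases this with h | h
        · exact absurd h two_ne_zero
        · exact h
      -- x ∈ b₊ ∩ b₋ ⇒ x ∈ hsub
      obtain ⟨xn, hxn, xh, hxh, hxd⟩ := Submodule.mem_sup.mp hx
      rw [hxy] at hy
      obtain ⟨ym, hym, yh, hyh, hyd⟩ := Submodule.mem_sup.mp hy
      have hxnm : xn ∈ hsub ⊔ nm := by
        have : xn = ym + (yh - xh) := by
          have : xn + xh = ym + yh := by rw [hxd, hyd]
          linear_combination (norm := module) this
        rw [this]
        exact add_mem (Submodule.mem_sup_right hym)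
          (Submodule.mem_sup_left (sub_mem hyh hxh))
      have hxn0 : xn = 0 := by
        have : xn ∈ np ⊓ (hsub ⊔ nm) := ⟨hxn, hxnm⟩
        rw [h_indep₁] at this
        exact Submodule.mem_bot k |>.mp this
      have hxh' : x ∈ hsub := by rw [← hxd, hxn0, zero_add]; exact hxh
      have hx0 : x = 0 := by rw [← hπh_id x hxh', hπ0]
      rw [show ηp x = ηp 0 from congrArg ηp hx0, map_zero]
    · rw [codisjoint_iff, eq_top_iff]
      rintro ⟨z, a⟩ -
      have hz : z ∈ np ⊔ hsub ⊔ nm := by rw [h_span]; trivial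
      obtain ⟨w, hw, m, hm, hwm⟩ := Submodule.mem_sup.mp hz
      obtain ⟨n, hn, c, hc, hnc⟩ := Submodule.mem_sup.mp hw
      set xh : g := (2 : k)⁻¹ • (c + (a : g)) with hxh_def
      set yh : g := (2 : k)⁻¹ • (c - (a : g)) with hyh_def
      have hxh : xh ∈ hsub := Submodule.smul_mem _ _ (add_mem hc a.2)
      have hyh : yh ∈ hsub := Submodule.smul_mem _ _ (sub_mem hc a.2)
      have hx : n + xh ∈ np ⊔ hsub := add_mem (Submodule.mem_sup_left hn)
        (Submodule.mem_sup_right hxh)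
      have hy : m + yh ∈ nm ⊔ hsub := add_mem (Submodule.mem_sup_left hm)
        (Submodule.mem_sup_right hyh)
      have hπx : πh (n + xh) = xh := by
        rw [map_add, hπh_np n hn, hπh_id xh hxh, zero_add]
      have hπy : πh (m + yh) = yh := by
        rw [map_add, hπh_nm m hm, hπh_id yh hyh, zero_add]
      have h2 : (2 : k) ≠ 0 := two_ne_zero
      have hsum : xh + yh = c := by
        rw [hxh_def, hyh_def, ← smul_add]
        have : c + (a : g) + (c - (a : g)) = (2 : k) • c := by
          rw [two_smul]; abel
        rw [this, smul_smul, inv_mul_cancel₀ h2, one_smul]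
      have hdiff : xh - yh = (a : g) := by
        rw [hxh_def, hyh_def, ← smul_sub]
        have : c + (a : g) - (c - (a : g)) = (2 : k) • (a : g) := by
          rw [two_smul]; abel
        rw [this, smul_smul, inv_mul_cancel₀ h2, one_smul]
      have hkey : ηp (n + xh) + ηm (m + yh) = ((z, a) : g × ↥hsub) := by
        rw [hηp, hηm]
        refine Prod.ext ?_ ?_
        · show (n + xh) + (m + yh) = z
          rw [← hwm, ← hnc]
          linear_combination (norm := module) hsum
        · show (⟨πh (n + xh), hπh_mem _⟩ : ↥hsub) + -⟨πh (m + yh), hπh_mem _⟩ = a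
          refine Subtype.ext ?_
          push_cast
          rw [hπx, hπy]
          linear_combination (norm := module) hdiff
      rw [← hkey]
      exact add_mem
        (Submodule.mem_sup_left (Submodule.mem_map_of_mem hx))
        (Submodule.mem_sup_right (Submodule.mem_map_of_mem hy))
end
end

section
/- Let A = (aᵢⱼ) be the Cartan matrix of a Lie superalgebra of type A–G with simple roots α₁,…,αₛ and exactly one odd simple root αₘ with aₘₘ = 0 and m−1, m, m+1 ∈ {1,…,s}, with symmetrizing constants d_{m−1} = d_m = 1, d_{m+1} = −1 and aᵢⱼ = (1+(−1)^{δ_{i,m}})δ_{i,j} − (−1)^{δ_{i,m}}δ_{i,j−1} − δ_{i,j+1} for i,j ∈ {m−1,m,m+1}. In the free associative superalgebra 'f over ℂ(q) on generators θᵢ (with θₘ odd, the others even), equipped with the unique bilinear form C satisfying C(1,1)=1, C(θᵢ,θⱼ) = δᵢⱼ(qᵢ−qᵢ^{−1})^{−1} for i=j≠m, C(θₘ,θₘ)=1, and compatibility with the twisted comultiplication r(θᵢ) = θᵢ⊗1 + 1⊗θᵢ, the element l = θₘθ_{m−1}θₘθ_{m+1} + θₘθ_{m+1}θₘθ_{m−1}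 + θ_{m−1}θₘθ_{m+1}θₘ + θ_{m+1}θₘθ_{m−1}θₘ − (q+q^{−1})θₘθ_{m−1}θ_{m+1}θₘ lies in the kernel of C; in particular C(θ_{m+1}θₘθ_{m−1}θₘ, l) = 0. -/
open TensorProduct
open scoped TensorProduct

noncomputable section

/-- The base field `ℂ(q)`. -/
abbrev Kq : Type := RatFunc ℂ

/-- The indeterminate `q`. -/
def qq : Kq := RatFunc.X

/-- The free associative superalgebra `'f` on the generators
`θ_{m-1}, θ_m, θ_{m+1}` (indexed by `0, 1, 2`). -/
abbrev Ff : Type := FreeAlgebra Kq (Fin 3)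

/-- The generators `θᵢ`. -/
def θ (i : Fin 3) : Ff := FreeAlgebra.ι Kq i

/-- Parities of the generators: only `θ_m` (index 1) is odd. -/
def pgen : Fin 3 → ZMod 2 := ![0, 1, 0]

/-- The parity of a multidegree `ν ∈ ℕ[I]`. -/
def pardeg (ν : Fin 3 → ℕ) : ZMod 2 := ∑ i : Fin 3, (ν i : ZMod 2) * pgen i

/-- The symmetrizing constants `d_{m-1} = d_m = 1`, `d_{m+1} = −1`. -/
def dsym : Fin 3 → ℤ := ![1, 1, -1]

/-- The Cartan matrix
`aᵢⱼ = (1+(−1)^{δ_{i,m}})δ_{i,j} − (−1)^{δ_{i,m}}δ_{i,j−1} − δ_{i,j+1}`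
(indices `0,1,2` standing for `m−1, m, m+1`; the odd root is `m = 1`, with
`a_{mm} = 0`). -/
def cartanA : Fin 3 → Fin 3 → ℤ := fun i j =>
  (1 + (-1 : ℤ) ^ (if i = (1 : Fin 3) then 1 else 0)) * (if i = j then 1 else 0)
  - (-1 : ℤ) ^ (if i = (1 : Fin 3) then 1 else 0) *
      (if (i : ℕ) + 1 = (j : ℕ) then 1 else 0)
  - (if (i : ℕ) = (j : ℕ) + 1 then 1 else 0)

/-- `⟨ν,ν′⟩ = Σᵢⱼ dᵢ aᵢⱼ νᵢ ν′ⱼ`. -/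
def pairdeg (ν μ : Fin 3 → ℕ) : ℤ :=
  ∑ i : Fin 3, ∑ j : Fin 3, dsym i * cartanA i j * (ν i : ℤ) * (μ j : ℤ)

/-- `qᵢ = q^{dᵢ}`. -/
def qd (i : Fin 3) : Kq := qq ^ dsym i

/-!
Words in the generators span `'f`, and `C` pairs elements of different multidegrees to zero, so it
suffices to pair `l` with the twelve words of multidegree `(1, 2, 1)`. On words, `r` is a twisted
shuffle sum, and `C(θᵢ y, z) = C₂(θᵢ ⊗ y, r(z))` peels off one letter at a time; this turns
`C(w, w')` into an explicit Laurent polynomial in `q` (with `(q - q⁻¹)⁻¹`), and for each of the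
twelve words the five contributions of `l` cancel.
-/

theorem FreeAlgebra.span_range_list_prod_ι (R X : Type*) [CommSemiring R] :
    Submodule.span R (Set.range fun L : List X => (L.map (FreeAlgebra.ι R)).prod) = ⊤ := by
  have hwords : (Set.range fun L : List X => (L.map (FreeAlgebra.ι R)).prod) =
      (Submonoid.closure (Set.range (FreeAlgebra.ι R (X := X))) : Set (FreeAlgebra R X)) := by
    rw [← FreeMonoid.mrange_lift, MonoidHom.coe_mrange]
    exact congrArg Set.range (funext fun L => (FreeMonoid.lift_ofList _ L).symm)
  rw [hwords, ← Algebra.adjoin_eq_span, FreeAlgebra.adjoin_range_ι, Algebra.top_toSubmodule]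

def word (L : List (Fin 3)) : Ff := (L.map θ).prod

def wordDeg (L : List (Fin 3)) : Fin 3 → ℕ := fun i => L.count i

@[simp] lemma word_nil : word [] = 1 := rfl

@[simp] lemma word_cons (j : Fin 3) (t : List (Fin 3)) : word (j :: t) = θ j * word t := by
  simp [word]

@[simp] lemma wordDeg_nil : wordDeg [] = 0 := rfl

lemma wordDeg_cons (j : Fin 3) (t : List (Fin 3)) :
    wordDeg (j :: t) = Pi.single j 1 + wordDeg t := by
  funext i
  by_cases h : i = j
  · subst h; simp [wordDeg, add_comm]
  · simp [wordDeg, h, Ne.symm h]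

lemma wordDeg_singleton (j : Fin 3) : wordDeg [j] = Pi.single j 1 := by
  simp [wordDeg_cons]

lemma length_eq_of_wordDeg_eq {L M : List (Fin 3)} (h : wordDeg L = wordDeg M) :
    L.length = M.length := by
  have hsum (L : List (Fin 3)) : ∑ i, wordDeg L i = L.length := by
    induction L with
    | nil => simp
    | cons j t ih => simp [wordDeg_cons, Finset.sum_add_distrib, ih, add_comm]
  rw [← hsum, ← hsum, h]

lemma neg_one_pow_pardeg_mul (ν μ : Fin 3 → ℕ) :
    (-1 : Kq) ^ ((pardeg ν).val * (pardeg μ).val) = (-1) ^ (ν 1 * μ 1) := by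
  have hpar (ν : Fin 3 → ℕ) : pardeg ν = (ν 1 : ZMod 2) := by
    simp [pardeg, Fin.sum_univ_three, pgen]
  rw [hpar, hpar, ZMod.val_natCast, ZMod.val_natCast, neg_one_pow_eq_pow_mod_two,
    ← Nat.mul_mod, ← neg_one_pow_eq_pow_mod_two]

lemma qq_ne_zero : qq ≠ 0 := RatFunc.X_ne_zero

def twist (ν μ : Fin 3 → ℕ) : Kq := (-1) ^ ((pardeg ν).val * (pardeg μ).val) * qq ^ pairdeg ν μ

lemma twist_add_right (ν μ₁ μ₂ : Fin 3 → ℕ) :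
    twist ν (μ₁ + μ₂) = twist ν μ₁ * twist ν μ₂ := by
  have hpair : pairdeg ν (μ₁ + μ₂) = pairdeg ν μ₁ + pairdeg ν μ₂ := by
    simp [pairdeg, mul_add, Finset.sum_add_distrib]
  simp only [twist, neg_one_pow_pardeg_mul, Pi.add_apply, mul_add, pow_add, hpair,
    zpow_add₀ qq_ne_zero]
  ring

lemma twist_zero_left (μ : Fin 3 → ℕ) : twist 0 μ = 1 := by
  simp [twist, neg_one_pow_pardeg_mul, pairdeg]

lemma twist_zero_right (ν : Fin 3 → ℕ) : twist ν 0 = 1 := by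
  simp [twist, neg_one_pow_pardeg_mul, pairdeg]

lemma twist_single_single (j k : Fin 3) :
    twist (Pi.single j 1) (Pi.single k 1) =
      ![![qq ^ 2, qq⁻¹, 1], ![qq⁻¹, -1, qq], ![1, qq, qq⁻¹ ^ 2]] j k := by
  fin_cases j <;> fin_cases k <;>
    simp [twist, neg_one_pow_pardeg_mul, pairdeg, Fin.sum_univ_three, dsym, cartanA]

lemma word_mem_of_grading {grF : (Fin 3 → ℕ) → Submodule Kq Ff}
    (hgr_one : (1 : Ff) ∈ grF 0) (hgr_gen : ∀ i, θ i ∈ grF (Pi.single i 1))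
    (hgr_mul : ∀ (ν μ : Fin 3 → ℕ) (x y : Ff), x ∈ grF ν → y ∈ grF μ → x * y ∈ grF (ν + μ))
    (L : List (Fin 3)) : word L ∈ grF (wordDeg L) := by
  induction L with
  | nil => exact hgr_one
  | cons j t ih => rw [word_cons, wordDeg_cons]; exact hgr_mul _ _ _ _ (hgr_gen j) ih

/-- The terms `(c, u, v)` of `r(θ_{j₁} ⋯ θ_{jₙ}) = ∑ c • θ_u ⊗ θ_v`: each letter goes either to the
left factor or, paying the twist past the letters already sent left, to the right one. -/
def rTerms : List (Fin 3) → List (Kq × List (Fin 3) × List (Fin 3))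
  | [] => [(1, [], [])]
  | j :: t =>
      (rTerms t).map (fun p => (p.1, j :: p.2.1, p.2.2)) ++
      (rTerms t).map (fun p => (p.1 * twist (Pi.single j 1) (wordDeg p.2.1), p.2.1, j :: p.2.2))

lemma rc_word_eq_sum_rTerms {grF : (Fin 3 → ℕ) → Submodule Kq Ff}
    {tm : Ff ⊗[Kq] Ff →ₗ[Kq] Ff ⊗[Kq] Ff →ₗ[Kq] Ff ⊗[Kq] Ff} {rc : Ff →ₗ[Kq] Ff ⊗[Kq] Ff}
    (hword : ∀ L, word L ∈ grF (wordDeg L))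
    (htm_char : ∀ (ν₁ ν₂ μ₁ μ₂ : Fin 3 → ℕ) (x₁ x₂ y₁ y₂ : Ff),
      x₁ ∈ grF ν₁ → x₂ ∈ grF ν₂ → y₁ ∈ grF μ₁ → y₂ ∈ grF μ₂ →
      tm (x₁ ⊗ₜ[Kq] x₂) (y₁ ⊗ₜ[Kq] y₂) =
        (((-1 : Kq) ^ ((pardeg ν₂).val * (pardeg μ₁).val)) * qq ^ (pairdeg ν₂ μ₁)) •
          ((x₁ * y₁) ⊗ₜ[Kq] (x₂ * y₂)))
    (hrc_one : rc 1 = (1 : Ff) ⊗ₜ[Kq] (1 : Ff))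
    (hrc_gen : ∀ i, rc (θ i) = θ i ⊗ₜ[Kq] (1 : Ff) + (1 : Ff) ⊗ₜ[Kq] θ i)
    (hrc_mul : ∀ x y : Ff, rc (x * y) = tm (rc x) (rc y)) (L : List (Fin 3)) :
    rc (word L) = ((rTerms L).map fun p => p.1 • (word p.2.1 ⊗ₜ[Kq] word p.2.2)).sum := by
  induction L with
  | nil => simp [rTerms, hrc_one]
  | cons j t ih =>
    have hθ : θ j = word [j] := by simp
    have htwist (ν μ : Fin 3 → ℕ) :
        (-1 : Kq) ^ ((pardeg ν).val * (pardeg μ).val) * qq ^ pairdeg ν μ = twist ν μ := rfl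
    have hterm (c : Kq) (u v : List (Fin 3)) :
        tm (θ j ⊗ₜ[Kq] 1 + 1 ⊗ₜ[Kq] θ j) (c • (word u ⊗ₜ[Kq] word v)) =
          c • (word (j :: u) ⊗ₜ[Kq] word v) +
            (c * twist (Pi.single j 1) (wordDeg u)) • (word u ⊗ₜ[Kq] word (j :: v)) := by
      rw [map_smul, map_add, LinearMap.add_apply, hθ, ← word_nil,
        htm_char _ _ _ _ _ _ _ _ (hword [j]) (hword []) (hword u) (hword v),
        htm_char _ _ _ _ _ _ _ _ (hword []) (hword [j]) (hword u) (hword v)]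
      simp only [htwist, wordDeg_nil, wordDeg_singleton, twist_zero_left, one_smul, smul_add,
        smul_smul, word_cons, word_nil, mul_one, one_mul]
    rw [word_cons, hrc_mul, hrc_gen, ih, map_list_sum, rTerms, List.map_append, List.sum_append,
      List.map_map, List.map_map, List.map_map, ← List.sum_map_add]
    exact congrArg List.sum (List.map_congr_left fun p _ => hterm p.1 p.2.1 p.2.2)

def genNorm (i : Fin 3) : Kq := if i = 1 then 1 else (qd i - (qd i)⁻¹)⁻¹

/-- The value of `C` on a pair of words, computed by peeling off the first letter of the left
word with `C(θᵢ t, M) = C₂(θᵢ ⊗ t, r(M))`. -/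
def wordForm : List (Fin 3) → List (Fin 3) → Kq
  | [], M => if M = [] then 1 else 0
  | i :: t, M => ((rTerms M).map fun p =>
      if p.2.1 = [i] then p.1 * (-1) ^ (t.count 1 * [i].count 1) * genNorm i * wordForm t p.2.2
      else 0).sum

section Form

variable {grF : (Fin 3 → ℕ) → Submodule Kq Ff} {C : Ff →ₗ[Kq] Ff →ₗ[Kq] Kq}

lemma form_word_eq_zero_of_length_ne
    (hword : ∀ L, word L ∈ grF (wordDeg L))
    (hC_deg : ∀ (ν μ : Fin 3 → ℕ), ν ≠ μ → ∀ x ∈ grF ν, ∀ y ∈ grF μ, C x y = 0)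
    {L M : List (Fin 3)} (h : L.length ≠ M.length) : C (word L) (word M) = 0 :=
  hC_deg _ _ (fun hdeg => h (length_eq_of_wordDeg_eq hdeg)) _ (hword L) _ (hword M)

lemma form_gen_word
    (hword : ∀ L, word L ∈ grF (wordDeg L))
    (hC_gen : ∀ i j : Fin 3, C (θ i) (θ j) =
      if i = j then (if i = 1 then 1 else (qd i - (qd i)⁻¹)⁻¹) else 0)
    (hC_deg : ∀ (ν μ : Fin 3 → ℕ), ν ≠ μ → ∀ x ∈ grF ν, ∀ y ∈ grF μ, C x y = 0)
    (i : Fin 3) (u : List (Fin 3)) : C (θ i) (word u) = if u = [i] then genNorm i else 0 := by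
  match u with
  | [j] =>
    rw [word_cons, word_nil, mul_one, hC_gen]
    by_cases h : i = j
    · subst h; simp [genNorm]
    · simp [h, Ne.symm h]
  | [] =>
    simpa using form_word_eq_zero_of_length_ne (L := [i]) (M := []) hword hC_deg (by simp)
  | j :: k :: v =>
    simpa using form_word_eq_zero_of_length_ne (L := [i]) (M := j :: k :: v) hword hC_deg (by simp)

lemma form_word_word {C2 : Ff ⊗[Kq] Ff →ₗ[Kq] Ff ⊗[Kq] Ff →ₗ[Kq] Kq} {rc : Ff →ₗ[Kq] Ff ⊗[Kq] Ff}
    (hword : ∀ L, word L ∈ grF (wordDeg L))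
    (hrc_word : ∀ L,
      rc (word L) = ((rTerms L).map fun p => p.1 • (word p.2.1 ⊗ₜ[Kq] word p.2.2)).sum)
    (hC2_char : ∀ (ν μ : Fin 3 → ℕ) (x₁ x₂ y₁ y₂ : Ff),
      x₂ ∈ grF ν → y₁ ∈ grF μ →
      C2 (x₁ ⊗ₜ[Kq] x₂) (y₁ ⊗ₜ[Kq] y₂) =
        ((-1 : Kq) ^ ((pardeg ν).val * (pardeg μ).val)) * (C x₁ y₁ * C x₂ y₂))
    (hC_one : C 1 1 = 1)
    (hC_gen : ∀ i j : Fin 3, C (θ i) (θ j) =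
      if i = j then (if i = 1 then 1 else (qd i - (qd i)⁻¹)⁻¹) else 0)
    (hC_left : ∀ x y z : Ff, C (x * y) z = C2 (x ⊗ₜ[Kq] y) (rc z))
    (hC_deg : ∀ (ν μ : Fin 3 → ℕ), ν ≠ μ → ∀ x ∈ grF ν, ∀ y ∈ grF μ, C x y = 0)
    (L M : List (Fin 3)) : C (word L) (word M) = wordForm L M := by
  induction L generalizing M with
  | nil =>
    rw [wordForm]
    split_ifs with hM
    · rw [hM, word_nil, hC_one]
    · exact form_word_eq_zero_of_length_ne hword hC_deg (List.length_pos_of_ne_nil hM).ne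
  | cons i t ih =>
    rw [word_cons, hC_left, hrc_word, map_list_sum, List.map_map, wordForm]
    refine congrArg List.sum (List.map_congr_left fun p _ => ?_)
    rw [Function.comp_apply, map_smul, smul_eq_mul,
      hC2_char _ _ _ _ _ _ (hword t) (hword p.2.1), form_gen_word hword hC_gen hC_deg,
      neg_one_pow_pardeg_mul, ih]
    split_ifs with hp
    · simp only [hp, wordDeg]
      ring
    · simp

end Form

lemma qq_sq_sub_one_ne_zero : qq ^ 2 - 1 ≠ 0 := by
  intro h
  have hX : (Polynomial.X ^ 2 : Polynomial ℂ) = 1 := by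
    apply IsFractionRing.injective (Polynomial ℂ) (RatFunc ℂ)
    rw [map_pow, map_one, RatFunc.algebraMap_X]
    exact sub_eq_zero.mp h
  simpa using congrArg Polynomial.natDegree hX

lemma wordForm_serre_eq_zero (L : List (Fin 3)) (hL : wordDeg L = wordDeg [1, 0, 1, 2]) :
    wordForm L [1, 0, 1, 2] + wordForm L [1, 2, 1, 0] + wordForm L [0, 1, 2, 1] +
      wordForm L [2, 1, 0, 1] - (qq + qq⁻¹) * wordForm L [1, 0, 2, 1] = 0 := by
  have hq := qq_ne_zero
  have hq2 := qq_sq_sub_one_ne_zero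
  obtain ⟨a, b, c, d, rfl⟩ : ∃ a b c d, L = [a, b, c, d] := by
    match L, length_eq_of_wordDeg_eq hL with
    | [a, b, c, d], _ => exact ⟨a, b, c, d, rfl⟩
  fin_cases a <;> fin_cases b <;> fin_cases c <;> fin_cases d <;>
    first
    | exact absurd hL (by decide)
    | (simp [wordForm, rTerms, genNorm, qd, dsym, wordDeg_cons, twist_add_right,
        twist_single_single, twist_zero_right] <;> field_simp <;> ring)

theorem quantum_serre_C_in_kernel_general
    -- the multidegree grading of the free algebra
    (grF : (Fin 3 → ℕ) → Submodule Kq Ff)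
    (hgr_one : (1 : Ff) ∈ grF 0)
    (hgr_gen : ∀ i, θ i ∈ grF (Pi.single i 1))
    (hgr_mul : ∀ (ν μ : Fin 3 → ℕ) (x y : Ff),
      x ∈ grF ν → y ∈ grF μ → x * y ∈ grF (ν + μ))
    -- the twisted multiplication on 'f ⊗ 'f
    (tm : Ff ⊗[Kq] Ff →ₗ[Kq] Ff ⊗[Kq] Ff →ₗ[Kq] Ff ⊗[Kq] Ff)
    (htm_char : ∀ (ν₁ ν₂ μ₁ μ₂ : Fin 3 → ℕ) (x₁ x₂ y₁ y₂ : Ff),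
      x₁ ∈ grF ν₁ → x₂ ∈ grF ν₂ → y₁ ∈ grF μ₁ → y₂ ∈ grF μ₂ →
      tm (x₁ ⊗ₜ[Kq] x₂) (y₁ ⊗ₜ[Kq] y₂) =
        (((-1 : Kq) ^ ((pardeg ν₂).val * (pardeg μ₁).val)) * qq ^ (pairdeg ν₂ μ₁)) •
          ((x₁ * y₁) ⊗ₜ[Kq] (x₂ * y₂)))
    -- the twisted comultiplication r
    (rc : Ff →ₗ[Kq] Ff ⊗[Kq] Ff)
    (hrc_one : rc 1 = (1 : Ff) ⊗ₜ[Kq] (1 : Ff))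
    (hrc_gen : ∀ i, rc (θ i) = θ i ⊗ₜ[Kq] (1 : Ff) + (1 : Ff) ⊗ₜ[Kq] θ i)
    (hrc_mul : ∀ x y : Ff, rc (x * y) = tm (rc x) (rc y))
    -- the bilinear form C and its extension C2 to 'f ⊗ 'f
    (C : Ff →ₗ[Kq] Ff →ₗ[Kq] Kq)
    (C2 : Ff ⊗[Kq] Ff →ₗ[Kq] Ff ⊗[Kq] Ff →ₗ[Kq] Kq)
    (hC2_char : ∀ (ν μ : Fin 3 → ℕ) (x₁ x₂ y₁ y₂ : Ff),
      x₂ ∈ grF ν → y₁ ∈ grF μ →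
      C2 (x₁ ⊗ₜ[Kq] x₂) (y₁ ⊗ₜ[Kq] y₂) =
        ((-1 : Kq) ^ ((pardeg ν).val * (pardeg μ).val)) * (C x₁ y₁ * C x₂ y₂))
    (hC_one : C 1 1 = 1)
    (hC_gen : ∀ i j : Fin 3, C (θ i) (θ j) =
      if i = j then (if i = 1 then 1 else (qd i - (qd i)⁻¹)⁻¹) else 0)
    (hC_left : ∀ x y z : Ff, C (x * y) z = C2 (x ⊗ₜ[Kq] y) (rc z))
    (hC_deg : ∀ (ν μ : Fin 3 → ℕ), ν ≠ μ → ∀ x ∈ grF ν, ∀ y ∈ grF μ, C x y = 0) :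
    ∀ l : Ff,
      l = θ 1 * θ 0 * θ 1 * θ 2 + θ 1 * θ 2 * θ 1 * θ 0 +
          θ 0 * θ 1 * θ 2 * θ 1 + θ 2 * θ 1 * θ 0 * θ 1 -
          (qq + qq⁻¹) • (θ 1 * θ 0 * θ 2 * θ 1) →
      (∀ x : Ff, C x l = 0) ∧ C (θ 2 * θ 1 * θ 0 * θ 1) l = 0 := by
  intro l hl
  have hword := word_mem_of_grading hgr_one hgr_gen hgr_mul
  have hform := form_word_word hword (rc_word_eq_sum_rTerms hword htm_char hrc_one hrc_gen hrc_mul)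
    hC2_char hC_one hC_gen hC_left hC_deg
  have hl_word : l = word [1, 0, 1, 2] + word [1, 2, 1, 0] + word [0, 1, 2, 1] +
      word [2, 1, 0, 1] - (qq + qq⁻¹) • word [1, 0, 2, 1] := by
    simp [hl, mul_assoc]
  have hl_mem : l ∈ grF (wordDeg [1, 0, 1, 2]) := by
    have hmem (L : List (Fin 3)) (hL : wordDeg L = wordDeg [1, 0, 1, 2] := by decide) :
        word L ∈ grF (wordDeg [1, 0, 1, 2]) := hL ▸ hword L
    rw [hl_word]
    exact sub_mem (add_mem (add_mem (add_mem (hmem _) (hmem _)) (hmem _)) (hmem _))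
      (Submodule.smul_mem _ _ (hmem _))
  have hkernel : C.flip l = 0 := by
    refine LinearMap.ext_on_range (FreeAlgebra.span_range_list_prod_ι Kq (Fin 3)) fun L => ?_
    change C (word L) l = 0
    by_cases hL : wordDeg L = wordDeg [1, 0, 1, 2]
    · rw [hl_word]
      simp only [map_add, map_sub, map_smul, smul_eq_mul, hform]
      exact wordForm_serre_eq_zero L hL
    · exact hC_deg _ _ hL _ (hword L) _ hl_mem
  exact ⟨fun x => LinearMap.congr_fun hkernel x, LinearMap.congr_fun hkernel _⟩

/-- In the free associative superalgebra `'f` on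
`θ_{m-1}, θ_m, θ_{m+1}` (with `θ_m` odd), equipped with the bilinear form `C`
determined by `C(1,1) = 1`, `C(θᵢ,θⱼ) = δᵢⱼ (qᵢ − qᵢ⁻¹)⁻¹` for `i = j ≠ m`,
`C(θₘ,θₘ) = 1`, and compatibility with the twisted comultiplication
`r(θᵢ) = θᵢ⊗1 + 1⊗θᵢ` (where `'f ⊗ 'f` carries the twisted super
multiplication), the element
`l = θₘθ_{m−1}θₘθ_{m+1} + θₘθ_{m+1}θₘθ_{m−1} + θ_{m−1}θₘθ_{m+1}θₘ +
θ_{m+1}θₘθ_{m−1}θₘ − (q+q⁻¹)θₘθ_{m−1}θ_{m+1}θₘ`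
lies in the kernel of `C`; in particular `C(θ_{m+1}θₘθ_{m−1}θₘ, l) = 0`. -/
theorem quantum_serre_C_in_kernel
    -- the multidegree grading of the free algebra
    (grF : (Fin 3 → ℕ) → Submodule Kq Ff)
    (hgr_one : (1 : Ff) ∈ grF 0)
    (hgr_gen : ∀ i, θ i ∈ grF (Pi.single i 1))
    (hgr_mul : ∀ (ν μ : Fin 3 → ℕ) (x y : Ff),
      x ∈ grF ν → y ∈ grF μ → x * y ∈ grF (ν + μ))
    (hgr_span : ∀ ν : Fin 3 → ℕ, grF ν ≤ Submodule.span Kq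
      {w : Ff | ∃ L : List (Fin 3), w = (L.map θ).prod ∧ ∀ i, L.count i = ν i})
    -- the twisted multiplication on 'f ⊗ 'f
    (tm : Ff ⊗[Kq] Ff →ₗ[Kq] Ff ⊗[Kq] Ff →ₗ[Kq] Ff ⊗[Kq] Ff)
    (htm_char : ∀ (ν₁ ν₂ μ₁ μ₂ : Fin 3 → ℕ) (x₁ x₂ y₁ y₂ : Ff),
      x₁ ∈ grF ν₁ → x₂ ∈ grF ν₂ → y₁ ∈ grF μ₁ → y₂ ∈ grF μ₂ →
      tm (x₁ ⊗ₜ[Kq] x₂) (y₁ ⊗ₜ[Kq] y₂) =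
        (((-1 : Kq) ^ ((pardeg ν₂).val * (pardeg μ₁).val)) * qq ^ (pairdeg ν₂ μ₁)) •
          ((x₁ * y₁) ⊗ₜ[Kq] (x₂ * y₂)))
    -- the twisted comultiplication r
    (rc : Ff →ₗ[Kq] Ff ⊗[Kq] Ff)
    (hrc_one : rc 1 = (1 : Ff) ⊗ₜ[Kq] (1 : Ff))
    (hrc_gen : ∀ i, rc (θ i) = θ i ⊗ₜ[Kq] (1 : Ff) + (1 : Ff) ⊗ₜ[Kq] θ i)
    (hrc_mul : ∀ x y : Ff, rc (x * y) = tm (rc x) (rc y))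
    -- the bilinear form C and its extension C2 to 'f ⊗ 'f
    (C : Ff →ₗ[Kq] Ff →ₗ[Kq] Kq)
    (C2 : Ff ⊗[Kq] Ff →ₗ[Kq] Ff ⊗[Kq] Ff →ₗ[Kq] Kq)
    (hC2_char : ∀ (ν μ : Fin 3 → ℕ) (x₁ x₂ y₁ y₂ : Ff),
      x₂ ∈ grF ν → y₁ ∈ grF μ →
      C2 (x₁ ⊗ₜ[Kq] x₂) (y₁ ⊗ₜ[Kq] y₂) =
        ((-1 : Kq) ^ ((pardeg ν).val * (pardeg μ).val)) * (C x₁ y₁ * C x₂ y₂))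
    (hC_one : C 1 1 = 1)
    (hC_gen : ∀ i j : Fin 3, C (θ i) (θ j) =
      if i = j then (if i = 1 then 1 else (qd i - (qd i)⁻¹)⁻¹) else 0)
    (hC_right : ∀ x y z : Ff, C x (y * z) = C2 (rc x) (y ⊗ₜ[Kq] z))
    (hC_left : ∀ x y z : Ff, C (x * y) z = C2 (x ⊗ₜ[Kq] y) (rc z))
    (hC_deg : ∀ (ν μ : Fin 3 → ℕ), ν ≠ μ → ∀ x ∈ grF ν, ∀ y ∈ grF μ, C x y = 0) :
    ∀ l : Ff,
      l = θ 1 * θ 0 * θ 1 * θ 2 + θ 1 * θ 2 * θ 1 * θ 0 +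
          θ 0 * θ 1 * θ 2 * θ 1 + θ 2 * θ 1 * θ 0 * θ 1 -
          (qq + qq⁻¹) • (θ 1 * θ 0 * θ 2 * θ 1) →
      (∀ x : Ff, C x l = 0) ∧ C (θ 2 * θ 1 * θ 0 * θ 1) l = 0 :=
  quantum_serre_C_in_kernel_general grF hgr_one hgr_gen hgr_mul tm htm_char rc hrc_one hrc_gen
    hrc_mul C C2 hC2_char hC_one hC_gen hC_left hC_deg
end
end
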